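/- arXiv:1404.6819 — 2 statements merged into one kernel-verified Lean document; each statement's English description precedes it below -/
import Mathlib

section
/- Suppose {A_1,…,A_k} is an irreducible family of pairwise commuting matrices in M_S([0,∞)) for a finite set S, and let x be the unique non-negative common eigenvector of the A_i with Σ_{s∈S} x_s = 1. If y ∈ [0,∞)^S is non-zero with Σ_{s∈S} y_s = 1 and (A_i y)_s ≤ ρ(A_i) y_s for all 1 ≤ i ≤ k and all s ∈ S, then y = x. -/
noncomputable def specRad {S : Type*} [Fintype S] [DecidableEq S] (B : Matrix S S ℝ) : ℝ :=
  (spectralRadius ℂ (B.map Complex.ofReal)).toReal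

def matPow {S : Type*} [Fintype S] [DecidableEq S] {k : ℕ}
    (A : Fin k → Matrix S S ℝ) (n : Fin k → ℕ) : Matrix S S ℝ :=
  ((List.finRange k).map fun i => A i ^ n i).prod

def IsIrreducibleFamily {S : Type*} [Fintype S] [DecidableEq S] {k : ℕ}
    (A : Fin k → Matrix S S ℝ) : Prop :=
  (∀ i, A i ≠ 0) ∧
    ∃ F : Finset (Fin k → ℕ), ∀ v w : S, 0 < (∑ n ∈ F, matPow A n) v w

/-!
Summing the monomials `A^n`, `n ∈ F`, gives an entrywise positive matrix `B` with `B x = c x`,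
so `x` is strictly positive. A strictly positive eigenvector of a nonnegative matrix realises its
spectral radius (Collatz–Wielandt), hence `ρ(A_i)` is the eigenvalue of `x` and `B y ≤ c y`.
For `t = min_s y_s / x_s` the vector `z = y - t x` is nonnegative, vanishes somewhere and satisfies
`B z ≤ c z`; positivity of `B` forces `z = 0`, and the normalisation gives `t = 1`.
-/

open Matrix

namespace Matrix

variable {S : Type*} [Fintype S]

theorem mulVec_mono {M : Matrix S S ℝ} (hM : ∀ i j, 0 ≤ M i j) {u v : S → ℝ} (huv : u ≤ v) :
    M *ᵥ u ≤ M *ᵥ v :=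
  fun s => dotProduct_le_dotProduct_of_nonneg_left huv (hM s)

theorem mul_mulVec_le {M N : Matrix S S ℝ} (hM : ∀ i j, 0 ≤ M i j) {y : S → ℝ} {r t : ℝ}
    (ht : 0 ≤ t) (hMy : M *ᵥ y ≤ r • y) (hNy : N *ᵥ y ≤ t • y) :
    (M * N) *ᵥ y ≤ (r * t) • y :=
  calc (M * N) *ᵥ y = M *ᵥ (N *ᵥ y) := (mulVec_mulVec _ _ _).symm
    _ ≤ M *ᵥ (t • y) := mulVec_mono hM hNy
    _ = t • (M *ᵥ y) := mulVec_smul _ _ _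
    _ ≤ t • (r • y) := smul_le_smul_of_nonneg_left hMy ht
    _ = (r * t) • y := by rw [smul_smul, mul_comm]

theorem mulVec_apply_pos {B : Matrix S S ℝ} (hB : ∀ i j, 0 < B i j) {z : S → ℝ} (hz : 0 ≤ z)
    (hz0 : z ≠ 0) (s : S) : 0 < (B *ᵥ z) s := by
  obtain ⟨w, hw⟩ := Function.ne_iff.mp hz0
  exact Finset.sum_pos' (fun j _ => mul_nonneg (hB s j).le (hz j))
    ⟨w, Finset.mem_univ w, mul_pos (hB s w) ((hz w).lt_of_ne' hw)⟩

theorem pos_of_mulVec_eq_smul {B : Matrix S S ℝ} (hB : ∀ i j, 0 < B i j) {x : S → ℝ}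
    (hx : 0 ≤ x) (hx0 : x ≠ 0) {c : ℝ} (hBx : B *ᵥ x = c • x) (s : S) : 0 < x s := by
  have hpos := mulVec_apply_pos hB hx hx0 s
  rw [hBx] at hpos
  refine (hx s).lt_of_ne' fun hxs => ?_
  simp [hxs] at hpos

theorem eq_smul_of_mulVec_le {B : Matrix S S ℝ} (hB : ∀ i j, 0 < B i j) {x : S → ℝ}
    (hx : ∀ s, 0 < x s) {c : ℝ} (hBx : B *ᵥ x = c • x) {y : S → ℝ} (hBy : B *ᵥ y ≤ c • y)
    [Nonempty S] : ∃ t : ℝ, y = t • x := by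
  obtain ⟨s₀, -, hs₀⟩ := Finset.exists_min_image Finset.univ (fun s => y s / x s)
    Finset.univ_nonempty
  set t := y s₀ / x s₀
  refine ⟨t, sub_eq_zero.mp ?_⟩
  set z := y - t • x
  have hz : 0 ≤ z := fun s => sub_nonneg.mpr ((le_div_iff₀ (hx s)).mp (hs₀ s (Finset.mem_univ s)))
  have hzs₀ : z s₀ = 0 := sub_eq_zero.mpr (div_mul_cancel₀ _ (hx s₀).ne').symm
  have hBz : B *ᵥ z ≤ c • z := by
    rw [mulVec_sub, mulVec_smul, hBx, smul_sub, smul_comm t c]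
    exact sub_le_sub_right hBy _
  by_contra hz0
  have := (mulVec_apply_pos hB hz hz0 s₀).trans_le (hBz s₀)
  simp [hzs₀] at this

theorem norm_mulVec_map_ofReal_apply_le {A : Matrix S S ℝ} (hA : ∀ i j, 0 ≤ A i j) (v : S → ℂ)
    (s : S) : ‖(A.map Complex.ofReal *ᵥ v) s‖ ≤ (A *ᵥ fun w => ‖v w‖) s :=
  (norm_sum_le _ _).trans_eq <| Finset.sum_congr rfl fun w _ => by
    simp [Complex.norm_real, abs_of_nonneg (hA s w)]

section DecidableEq

variable [DecidableEq S]

theorem pow_mulVec_le {M : Matrix S S ℝ} (hM : ∀ i j, 0 ≤ M i j) {y : S → ℝ} {r : ℝ}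
    (hr : 0 ≤ r) (hMy : M *ᵥ y ≤ r • y) (m : ℕ) : (M ^ m) *ᵥ y ≤ r ^ m • y := by
  induction m with
  | zero => simp
  | succ m ih => simpa only [pow_succ'] using mul_mulVec_le hM (pow_nonneg hr m) hMy ih

theorem list_prod_mulVec_le {ι : Type*} {M : ι → Matrix S S ℝ} (hM : ∀ i a b, 0 ≤ M i a b)
    {y : S → ℝ} {r : ι → ℝ} (hr : ∀ i, 0 ≤ r i) (hMy : ∀ i, M i *ᵥ y ≤ r i • y) (L : List ι) :
    (L.map M).prod *ᵥ y ≤ (L.map r).prod • y := by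
  induction L with
  | nil => simp
  | cons i L ih =>
    simpa only [List.map_cons, List.prod_cons] using
      mul_mulVec_le (hM i) (List.prod_nonneg (by simpa using fun j _ => hr j)) (hMy i) ih

theorem pow_mulVec_eq_smul {M : Matrix S S ℝ} {x : S → ℝ} {lam : ℝ} (hMx : M *ᵥ x = lam • x)
    (m : ℕ) : (M ^ m) *ᵥ x = lam ^ m • x := by
  induction m with
  | zero => simp
  | succ m ih => rw [pow_succ', ← mulVec_mulVec, ih, mulVec_smul, hMx, smul_smul, pow_succ]

theorem list_prod_mulVec_eq_smul {ι : Type*} {M : ι → Matrix S S ℝ} {x : S → ℝ} {lam : ι → ℝ}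
    (hMx : ∀ i, M i *ᵥ x = lam i • x) (L : List ι) :
    (L.map M).prod *ᵥ x = (L.map lam).prod • x := by
  induction L with
  | nil => simp
  | cons i L ih =>
    rw [List.map_cons, List.prod_cons, ← mulVec_mulVec, ih, mulVec_smul, hMx, List.map_cons,
      List.prod_cons, smul_smul, mul_comm]

theorem mem_spectrum_iff_exists_mulVec_eq_smul {K : Type*} [Field K]
    {M : Matrix S S K} {μ : K} : μ ∈ spectrum K M ↔ ∃ v ≠ 0, M *ᵥ v = μ • v := by
  rw [← spectrum_toLin', ← Module.End.hasEigenvalue_iff_mem_spectrum]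
  constructor
  · intro h
    obtain ⟨v, hv⟩ := h.exists_hasEigenvector
    exact ⟨v, hv.2, by simpa using hv.apply_eq_smul⟩
  · rintro ⟨v, hv0, hv⟩
    exact Module.End.hasEigenvalue_of_hasEigenvector
      ⟨Module.End.mem_eigenspace_iff.mpr (by simpa using hv), hv0⟩

/-- Collatz–Wielandt: compare the eigenvalue equation for `v` with `A *ᵥ x ≤ lam • x` at an
index maximising `‖v s‖ / x s`. -/
theorem norm_le_of_mem_spectrum {A : Matrix S S ℝ} (hA : ∀ i j, 0 ≤ A i j) {x : S → ℝ}
    (hx : ∀ s, 0 < x s) {lam : ℝ} (hAx : A *ᵥ x ≤ lam • x) {μ : ℂ}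
    (hμ : μ ∈ spectrum ℂ (A.map Complex.ofReal)) : ‖μ‖ ≤ lam := by
  obtain ⟨v, hv0, hAv⟩ := mem_spectrum_iff_exists_mulVec_eq_smul.mp hμ
  obtain ⟨s₁, hs₁⟩ := Function.ne_iff.mp hv0
  obtain ⟨s₀, -, hs₀⟩ := Finset.exists_max_image Finset.univ (fun s => ‖v s‖ / x s)
    ⟨s₁, Finset.mem_univ s₁⟩
  set m := ‖v s₀‖ / x s₀
  have hm : 0 < m := (div_pos (norm_pos_iff.mpr hs₁) (hx s₁)).trans_le (hs₀ s₁ (by simp))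
  have hv_le : (fun w => ‖v w‖) ≤ m • x := fun w =>
    (div_le_iff₀ (hx w)).mp (hs₀ w (Finset.mem_univ w))
  have key : ‖μ‖ * (m * x s₀) ≤ lam * (m * x s₀) :=
    calc ‖μ‖ * (m * x s₀) = ‖(A.map Complex.ofReal *ᵥ v) s₀‖ := by
          rw [hAv, Pi.smul_apply, smul_eq_mul, norm_mul, div_mul_cancel₀ _ (hx s₀).ne']
      _ ≤ (A *ᵥ fun w => ‖v w‖) s₀ := norm_mulVec_map_ofReal_apply_le hA v s₀
      _ ≤ (A *ᵥ (m • x)) s₀ := mulVec_mono hA hv_le s₀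
      _ = m * (A *ᵥ x) s₀ := by rw [mulVec_smul, Pi.smul_apply, smul_eq_mul]
      _ ≤ m * (lam * x s₀) := mul_le_mul_of_nonneg_left (hAx s₀) hm.le
      _ = lam * (m * x s₀) := by ring
  exact le_of_mul_le_mul_right key (mul_pos hm (hx s₀))

end DecidableEq

end Matrix

section

variable {S : Type*} [Fintype S] [DecidableEq S]

theorem matPow_mulVec_le {k : ℕ} {A : Fin k → Matrix S S ℝ} (hA : ∀ i a b, 0 ≤ A i a b)
    {y : S → ℝ} {r : Fin k → ℝ} (hr : ∀ i, 0 ≤ r i) (hAy : ∀ i, A i *ᵥ y ≤ r i • y)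
    (n : Fin k → ℕ) : matPow A n *ᵥ y ≤ (∏ i, r i ^ n i) • y := by
  rw [Fin.prod_univ_def]
  exact list_prod_mulVec_le (fun i => pow_apply_nonneg (hA i) (n i))
    (fun i => pow_nonneg (hr i) (n i)) (fun i => pow_mulVec_le (hA i) (hr i) (hAy i) (n i)) _

theorem matPow_mulVec_eq_smul {k : ℕ} {A : Fin k → Matrix S S ℝ} {x : S → ℝ}
    {lam : Fin k → ℝ} (hAx : ∀ i, A i *ᵥ x = lam i • x) (n : Fin k → ℕ) :
    matPow A n *ᵥ x = (∏ i, lam i ^ n i) • x := by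
  rw [Fin.prod_univ_def]
  exact list_prod_mulVec_eq_smul (fun i => pow_mulVec_eq_smul (hAx i) (n i)) _

theorem specRad_eq_of_mulVec_eq_smul [Nonempty S] {A : Matrix S S ℝ}
    (hA : ∀ i j, 0 ≤ A i j) {x : S → ℝ} (hx : ∀ s, 0 < x s) {lam : ℝ}
    (hAx : A *ᵥ x = lam • x) : specRad A = lam := by
  obtain ⟨s⟩ := ‹Nonempty S›
  have hlam : 0 ≤ lam := by
    have h := mulVec_mono hA (show 0 ≤ x from fun w => (hx w).le) s
    rw [mulVec_zero, hAx] at h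
    exact nonneg_of_mul_nonneg_left h (hx s)
  have hmem : (lam : ℂ) ∈ spectrum ℂ (A.map Complex.ofReal) := by
    refine mem_spectrum_iff_exists_mulVec_eq_smul.mpr ⟨fun w => x w, ?_, ?_⟩
    · exact Function.ne_iff.mpr ⟨s, by simpa using (hx s).ne'⟩
    · ext w
      have h := congrArg Complex.ofReal (congrFun hAx w)
      simpa [mulVec, dotProduct] using h
  have hρ : spectralRadius ℂ (A.map Complex.ofReal) = ENNReal.ofReal lam := by
    refine le_antisymm (iSup₂_le fun μ hμ => ?_) (le_iSup₂_of_le (lam : ℂ) hmem ?_)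
    · rw [← enorm_eq_nnnorm, ← ofReal_norm]
      exact ENNReal.ofReal_le_ofReal (norm_le_of_mem_spectrum hA hx hAx.le hμ)
    · rw [← enorm_eq_nnnorm, ← ofReal_norm, Complex.norm_real, Real.norm_of_nonneg hlam]
  rw [specRad, hρ, ENNReal.toReal_ofReal hlam]

end

theorem subinvariant_unimodular_eq_eigenvector_general {S : Type*} [Fintype S] [DecidableEq S] {k : ℕ}
    (A : Fin k → Matrix S S ℝ)
    (hnn : ∀ i v w, 0 ≤ A i v w)
    (hirr : IsIrreducibleFamily A)
    (x : S → ℝ)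
    (hx : (∀ s, 0 ≤ x s) ∧ (∑ s, x s = 1) ∧
      ∀ i, ∃ lam : ℝ, (A i).mulVec x = lam • x)
    (y : S → ℝ) (hysum : ∑ s, y s = 1)
    (h : ∀ i s, (A i).mulVec y s ≤ specRad (A i) * y s) :
    y = x := by
  obtain ⟨hx0, hxsum, hxeig⟩ := hx
  choose lam hlam using hxeig
  obtain ⟨-, F, hF⟩ := hirr
  have hx_ne : x ≠ 0 := by rintro rfl; simp at hxsum
  obtain ⟨s, -⟩ := Function.ne_iff.mp hx_ne
  have : Nonempty S := ⟨s⟩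
  have hBx : (∑ n ∈ F, matPow A n) *ᵥ x = (∑ n ∈ F, ∏ i, lam i ^ n i) • x := by
    simp only [sum_mulVec, matPow_mulVec_eq_smul hlam, Finset.sum_smul]
  have hxpos := pos_of_mulVec_eq_smul hF hx0 hx_ne hBx
  have hρ i : specRad (A i) = lam i := specRad_eq_of_mulVec_eq_smul (hnn i) hxpos (hlam i)
  have hBy : (∑ n ∈ F, matPow A n) *ᵥ y ≤ (∑ n ∈ F, ∏ i, lam i ^ n i) • y := by
    rw [sum_mulVec, Finset.sum_smul]
    exact Finset.sum_le_sum fun n _ => matPow_mulVec_le hnn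
      (fun i => hρ i ▸ ENNReal.toReal_nonneg) (fun i s => hρ i ▸ h i s) n
  obtain ⟨t, rfl⟩ := eq_smul_of_mulVec_le hF hxpos hBx hBy
  obtain rfl : t = 1 := by simpa [← Finset.mul_sum, hxsum] using hysum
  exact one_smul ℝ x

/-- If `y ≥ 0` is non-zero of unit `1`-norm and `A_i y ≤ ρ(A_i) y` entrywise for all `i`,
then `y` equals the unimodular Perron–Frobenius eigenvector `x`. -/
theorem subinvariant_unimodular_eq_eigenvector {S : Type*} [Fintype S] [DecidableEq S] {k : ℕ}
    (A : Fin k → Matrix S S ℝ)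
    (hnn : ∀ i v w, 0 ≤ A i v w)
    (hcomm : ∀ i j, A i * A j = A j * A i)
    (hirr : IsIrreducibleFamily A)
    (x : S → ℝ)
    (hx : (∀ s, 0 ≤ x s) ∧ (∑ s, x s = 1) ∧
      ∀ i, ∃ lam : ℝ, (A i).mulVec x = lam • x)
    (y : S → ℝ) (hy0 : ∀ s, 0 ≤ y s) (hy : y ≠ 0) (hysum : ∑ s, y s = 1)
    (h : ∀ i s, (A i).mulVec y s ≤ specRad (A i) * y s) :
    y = x :=
  subinvariant_unimodular_eq_eigenvector_general A hnn hirr x hx y hysum h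
end

section
/- Let Λ be a strongly connected finite k-graph, suppose m, n ∈ ℕ^k satisfy m − n ∈ Per Λ, and let μ ∈ Λ^m. Then θ_{d(α)+m, d(α)+n}(αμ) = α·θ_{m,n}(μ) for all α ∈ Λ with s(α) = r(μ), and θ_{m+d(β), n+d(β)}(μβ) = θ_{m,n}(μ)·β for all β ∈ Λ with r(β) = s(μ). -/
/-- A higher-rank graph (`k`-graph): a countable category with a degree functor
`d : Λ → ℕ^k` satisfying the unique factorisation property.  Morphisms are called
paths; the vertices are the paths of degree `0` (the identity morphisms).
`r` and `s` are the codomain (range) and domain (source) maps.  By convention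
`Λ^{e_i} ≠ ∅` for each standard generator `e_i` of `ℕ^k`. -/
structure KGraph (k : ℕ) where
  Path : Type
  countable : Countable Path
  d : Path → Fin k → ℕ
  r : Path → Path
  s : Path → Path
  d_r : ∀ lam, d (r lam) = 0
  d_s : ∀ lam, d (s lam) = 0
  r_vertex : ∀ v, d v = 0 → r v = v
  s_vertex : ∀ v, d v = 0 → s v = v
  comp : ∀ μ ν : Path, s μ = r ν → Path
  r_comp : ∀ μ ν h, r (comp μ ν h) = r μ
  s_comp : ∀ μ ν h, s (comp μ ν h) = s ν
  d_comp : ∀ μ ν h, d (comp μ ν h) = d μ + d ν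
  id_comp : ∀ lam (h : s (r lam) = r lam), comp (r lam) lam h = lam
  comp_id : ∀ lam (h : s lam = r (s lam)), comp lam (s lam) h = lam
  assoc : ∀ μ ν τ (h1 : s μ = r ν) (h2 : s ν = r τ)
      (h3 : s (comp μ ν h1) = r τ) (h4 : s μ = r (comp ν τ h2)),
      comp (comp μ ν h1) τ h3 = comp μ (comp ν τ h2) h4
  factor : ∀ (lam : Path) (m n : Fin k → ℕ), d lam = m + n →
      ∃! μν : Path × Path, ∃ h : s μν.1 = r μν.2,
        d μν.1 = m ∧ d μν.2 = n ∧ comp μν.1 μν.2 h = lam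
  edge_nonempty : ∀ i : Fin k, ∃ lam, d lam = Pi.single i 1

namespace KGraph

variable {k : ℕ}

/-- The vertices of a `k`-graph: the paths of degree `0`. -/
abbrev Vertex (Λ : KGraph k) : Type := {v : Λ.Path // Λ.d v = 0}

/-- A `k`-graph is finite if `Λ^n` is finite for every `n ∈ ℕ^k`. -/
def IsFinite (Λ : KGraph k) : Prop := ∀ n : Fin k → ℕ, {lam : Λ.Path | Λ.d lam = n}.Finite

/-- A `k`-graph is strongly connected if `vΛw ≠ ∅` for all vertices `v, w`. -/
def StronglyConnected (Λ : KGraph k) : Prop :=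
  ∀ v w : Λ.Path, Λ.d v = 0 → Λ.d w = 0 → ∃ lam : Λ.Path, Λ.r lam = v ∧ Λ.s lam = w

/-- `Λ^min(μ,ν) = {(α,β) : μα = νβ, d(μα) = d(μ) ∨ d(ν)}`. -/
def minSet (Λ : KGraph k) (μ ν : Λ.Path) : Set (Λ.Path × Λ.Path) :=
  {p | ∃ (h1 : Λ.s μ = Λ.r p.1) (h2 : Λ.s ν = Λ.r p.2),
      Λ.comp μ p.1 h1 = Λ.comp ν p.2 h2 ∧ Λ.d μ + Λ.d p.1 = Λ.d μ ⊔ Λ.d ν}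

end KGraph

/-- An infinite path in a `k`-graph `Λ`: a degree-preserving functor `x : Ω_k → Λ`,
recorded by its values `x(m,n)` for `m ≤ n` in `ℕ^k`. -/
structure InfinitePath {k : ℕ} (Λ : KGraph k) where
  toFun : ∀ m n : Fin k → ℕ, m ≤ n → Λ.Path
  d_eq : ∀ m n h, Λ.d (toFun m n h) = n - m
  src : ∀ m n h, Λ.s (toFun m n h) = toFun n n le_rfl
  rng : ∀ m n h, Λ.r (toFun m n h) = toFun m m le_rfl
  comp_eq : ∀ m n p (h1 : m ≤ n) (h2 : n ≤ p)
      (hc : Λ.s (toFun m n h1) = Λ.r (toFun n p h2)),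
      Λ.comp (toFun m n h1) (toFun n p h2) hc = toFun m p (h1.trans h2)

namespace InfinitePath

variable {k : ℕ} {Λ : KGraph k}

/-- The shift map `σ^n` on the infinite-path space, `σ^n(x)(p,q) = x(n+p, n+q)`. -/
def shift (x : InfinitePath Λ) (n : Fin k → ℕ) : InfinitePath Λ where
  toFun p q h := x.toFun (n + p) (n + q) (add_le_add le_rfl h)
  d_eq p q h := by
    rw [x.d_eq]
    funext i
    exact Nat.add_sub_add_left (n i) (q i) (p i)
  src p q h := x.src _ _ _
  rng p q h := x.rng _ _ _
  comp_eq p q t h1 h2 hc := x.comp_eq _ _ _ _ _ hc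

/-- The range `r(x) = x(0,0)` of an infinite path. -/
def range (x : InfinitePath Λ) : Λ.Path := x.toFun 0 0 le_rfl

end InfinitePath

/-- `ExtEq Λ lam y x` says that `y = lam · x`, i.e. `y(0, d(lam)) = lam` and
`σ^{d(lam)}(y) = x`.  (Such an extension is unique when it exists.) -/
def KGraph.ExtEq {k : ℕ} (Λ : KGraph k) (lam : Λ.Path) (y x : InfinitePath Λ) : Prop :=
  y.toFun 0 (Λ.d lam) zero_le = lam ∧ y.shift (Λ.d lam) = x

/-- `Λ.IsTheta m n μ ν` says that `μ ∈ Λ^m`, `ν ∈ Λ^n`, and `μx = νx` for every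
infinite path `x ∈ Z(s(μ))`; i.e. `ν = θ_{m,n}(μ)`. -/
def KGraph.IsTheta {k : ℕ} (Λ : KGraph k) (m n : Fin k → ℕ) (μ ν : Λ.Path) : Prop :=
  Λ.d μ = m ∧ Λ.d ν = n ∧
    ∀ x : InfinitePath Λ, x.range = Λ.s μ →
      ∃ y : InfinitePath Λ, Λ.ExtEq μ y x ∧ Λ.ExtEq ν y x

/-- The periodicity group `Per Λ = {m − n : σ^m(x) = σ^n(x) for all x ∈ Λ^∞} ⊆ ℤ^k`. -/
def KGraph.Per {k : ℕ} (Λ : KGraph k) : Set (Fin k → ℤ) :=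
  {g | ∃ m n : Fin k → ℕ, (∀ i, (m i : ℤ) - n i = g i) ∧
      ∀ x : InfinitePath Λ, x.shift m = x.shift n}

/-- `Λ` is aperiodic if every vertex `v` admits `x ∈ Z(v)` with
`σ^m(x) ≠ σ^n(x)` for all `m ≠ n` in `ℕ^k`. -/
def KGraph.Aperiodic {k : ℕ} (Λ : KGraph k) : Prop :=
  ∀ v : Λ.Path, Λ.d v = 0 → ∃ x : InfinitePath Λ, x.range = v ∧
    ∀ m n : Fin k → ℕ, m ≠ n → x.shift m ≠ x.shift n

/-! For `x ∈ Z(s(μ))` the hypothesis gives one infinite path `y = μx = θ(μ)x`; then `αy` is both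
`(αμ)x` and `(αθ(μ))x`, and applying the hypothesis to `βx` gives a path that is both
`(μβ)x` and `(θ(μ)β)x`. So the content is the existence of the concatenation `λx` of a finite
and an infinite path: its segment `(p, q)` is the segment `(p, q)` of the finite path
`λ x(0, q)`, which by unique factorisation does not depend on how far `x` is followed. -/

namespace InfinitePath

variable {k : ℕ} {Λ : KGraph k}

theorem ext {x y : InfinitePath Λ} (h : ∀ p q hpq, x.toFun p q hpq = y.toFun p q hpq) :
    x = y := by
  cases x
  cases y
  congr
  funext p q hpq
  exact h p q hpq

theorem shift_shift (x : InfinitePath Λ) (a b : Fin k → ℕ) :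
    (x.shift a).shift b = x.shift (a + b) :=
  ext fun p q _ => by simp only [shift, add_assoc]

end InfinitePath

namespace KGraph

variable {k : ℕ} {Λ : KGraph k}

theorem comp_assoc {μ ν τ : Λ.Path} (h₁ : Λ.s μ = Λ.r ν) (h₂ : Λ.s (Λ.comp μ ν h₁) = Λ.r τ) :
    Λ.comp (Λ.comp μ ν h₁) τ h₂ =
      Λ.comp μ (Λ.comp ν τ (by rwa [s_comp] at h₂)) (by rwa [r_comp]) :=
  Λ.assoc _ _ _ _ _ _ _

theorem vertex_comp {v μ : Λ.Path} (hv : Λ.d v = 0) (h : Λ.s v = Λ.r μ) :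
    Λ.comp v μ h = μ := by
  obtain rfl : v = Λ.r μ := (Λ.s_vertex v hv).symm.trans h
  exact Λ.id_comp μ h

theorem comp_vertex {μ v : Λ.Path} (hv : Λ.d v = 0) (h : Λ.s μ = Λ.r v) :
    Λ.comp μ v h = μ := by
  obtain rfl : v = Λ.s μ := (Λ.r_vertex v hv).symm.trans h.symm
  exact Λ.comp_id μ h

theorem eq_of_comp_eq_comp {μ ν μ' ν' : Λ.Path} {h : Λ.s μ = Λ.r ν} {h' : Λ.s μ' = Λ.r ν'}
    (he : Λ.comp μ ν h = Λ.comp μ' ν' h') (hd : Λ.d μ = Λ.d μ') : μ = μ' ∧ ν = ν' := by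
  have hdν : Λ.d ν = Λ.d ν' := by
    have := congrArg Λ.d he
    rw [d_comp, d_comp, hd] at this
    exact add_left_cancel this
  exact Prod.mk.inj <| (Λ.factor _ _ _ (Λ.d_comp μ ν h)).unique (y₁ := (μ, ν)) (y₂ := (μ', ν'))
    ⟨h, rfl, rfl, rfl⟩ ⟨h', hd.symm, hdν.symm, he.symm⟩

theorem exists_comp_eq {lam : Λ.Path} {a : Fin k → ℕ} (ha : a ≤ Λ.d lam) :
    ∃ μ ν h, Λ.d μ = a ∧ Λ.comp μ ν h = lam := by
  obtain ⟨⟨μ, ν⟩, ⟨h, hμ, -, he⟩, -⟩ := Λ.factor lam a _ (add_tsub_cancel_of_le ha).symm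
  exact ⟨μ, ν, h, hμ, he⟩

def IsSegment (lam : Λ.Path) (a b : Fin k → ℕ) (δ : Λ.Path) : Prop :=
  ∃ π τ, ∃ (h₁ : Λ.s π = Λ.r δ) (h₂ : Λ.s (Λ.comp π δ h₁) = Λ.r τ),
    Λ.d π = a ∧ a + Λ.d δ = b ∧ Λ.comp (Λ.comp π δ h₁) τ h₂ = lam

namespace IsSegment

variable {lam δ ε : Λ.Path} {a b c : Fin k → ℕ}

theorem d_eq (hδ : Λ.IsSegment lam a b δ) : Λ.d δ = b - a := by
  obtain ⟨-, -, -, -, -, hb, -⟩ := hδ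
  rw [← hb, add_tsub_cancel_left]

theorem unique {δ' : Λ.Path} (hδ : Λ.IsSegment lam a b δ) (hδ' : Λ.IsSegment lam a b δ') :
    δ = δ' := by
  obtain ⟨π, τ, h₁, _, hπ, hb, rfl⟩ := hδ
  obtain ⟨π', τ', h₁', _, hπ', hb', he⟩ := hδ'
  have hd : Λ.d (Λ.comp π δ h₁) = Λ.d (Λ.comp π' δ' h₁') := by
    rw [d_comp, d_comp, hπ, hπ', hb, hb']
  obtain ⟨hπδ, -⟩ := eq_of_comp_eq_comp he.symm hd
  exact (eq_of_comp_eq_comp hπδ (hπ.trans hπ'.symm)).2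

theorem source (hδ : Λ.IsSegment lam a b δ) : Λ.IsSegment lam b b (Λ.s δ) := by
  obtain ⟨π, τ, h₁, h₂, hπ, hb, rfl⟩ := hδ
  have h : Λ.s (Λ.comp π δ h₁) = Λ.r (Λ.s δ) := by rw [s_comp, Λ.r_vertex _ (Λ.d_s δ)]
  refine ⟨Λ.comp π δ h₁, τ, h, ?_, by rw [d_comp, hπ, hb], by rw [d_s, add_zero], ?_⟩
  · rwa [comp_vertex (Λ.d_s δ)]
  · simp only [comp_vertex (Λ.d_s δ)]

theorem range (hδ : Λ.IsSegment lam a b δ) : Λ.IsSegment lam a a (Λ.r δ) := by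
  obtain ⟨π, τ, h₁, h₂, hπ, -, rfl⟩ := hδ
  have h : Λ.s π = Λ.r (Λ.r δ) := by rw [Λ.r_vertex _ (Λ.d_r δ)]; exact h₁
  refine ⟨π, Λ.comp δ τ (by rwa [s_comp] at h₂), h, ?_, hπ, by rw [d_r, add_zero], ?_⟩
  · rw [comp_vertex (Λ.d_r δ), r_comp]; exact h₁
  · simp only [comp_vertex (Λ.d_r δ), comp_assoc]

theorem comp_right (hδ : Λ.IsSegment lam a b δ) {τ : Λ.Path} (h : Λ.s lam = Λ.r τ) :
    Λ.IsSegment (Λ.comp lam τ h) a b δ := by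
  obtain ⟨π, τ₀, h₁, h₂, hπ, hb, rfl⟩ := hδ
  exact ⟨π, Λ.comp τ₀ τ (by rwa [s_comp] at h), h₁, by rwa [r_comp], hπ, hb,
    (comp_assoc _ _).symm⟩

theorem comp (hδ : Λ.IsSegment lam a b δ) (hε : Λ.IsSegment lam b c ε)
    (h : Λ.s δ = Λ.r ε) : Λ.IsSegment lam a c (Λ.comp δ ε h) := by
  obtain ⟨π, τ, h₁, _, hπ, hb, rfl⟩ := hδ
  obtain ⟨π', τ', _, _, hπ', hc, he⟩ := hε
  rw [comp_assoc] at he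
  obtain ⟨rfl, -⟩ := eq_of_comp_eq_comp he.symm (by rw [d_comp, hπ, hb, hπ'])
  refine ⟨π, τ', by rwa [r_comp], by rwa [← comp_assoc], hπ, ?_, ?_⟩
  · rw [d_comp, ← add_assoc, hb, hc]
  · rw [← he]
    simp only [comp_assoc]

end IsSegment

theorem exists_isSegment {lam : Λ.Path} {a b : Fin k → ℕ} (hab : a ≤ b) (hb : b ≤ Λ.d lam) :
    ∃ δ, Λ.IsSegment lam a b δ := by
  obtain ⟨μ, τ, h, hμ, rfl⟩ := exists_comp_eq hb
  obtain ⟨π, δ, h₁, hπ, rfl⟩ := exists_comp_eq (hab.trans_eq hμ.symm)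
  refine ⟨δ, π, τ, h₁, h, hπ, ?_, rfl⟩
  rw [← hμ, d_comp, hπ]

theorem isSegment_left {δ τ : Λ.Path} (h : Λ.s δ = Λ.r τ) :
    Λ.IsSegment (Λ.comp δ τ h) 0 (Λ.d δ) δ :=
  ⟨Λ.r δ, τ, Λ.s_vertex _ (Λ.d_r δ), by rwa [vertex_comp (Λ.d_r δ)], Λ.d_r δ, zero_add _,
    by simp only [vertex_comp (Λ.d_r δ)]⟩

theorem isSegment_right {π δ : Λ.Path} (h : Λ.s π = Λ.r δ) {a b : Fin k → ℕ}
    (ha : Λ.d π = a) (hb : a + Λ.d δ = b) : Λ.IsSegment (Λ.comp π δ h) a b δ :=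
  ⟨π, Λ.s δ, h, by rw [s_comp, Λ.r_vertex _ (Λ.d_s δ)], ha, hb, comp_vertex (Λ.d_s δ) _⟩

theorem ExtEq.range_eq {lam : Λ.Path} {y x : InfinitePath Λ} (h : Λ.ExtEq lam y x) :
    y.range = Λ.r lam :=
  (y.rng 0 (Λ.d lam) zero_le).symm.trans (congrArg Λ.r h.1)

theorem ExtEq.comp {lam τ : Λ.Path} (h : Λ.s lam = Λ.r τ) {z y x : InfinitePath Λ}
    (hz : Λ.ExtEq lam z y) (hy : Λ.ExtEq τ y x) : Λ.ExtEq (Λ.comp lam τ h) z x := by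
  obtain ⟨hz₁, rfl⟩ := hz
  obtain ⟨hy₁, rfl⟩ := hy
  refine ⟨?_, by rw [InfinitePath.shift_shift, d_comp]⟩
  have hmid : Λ.d lam ≤ Λ.d lam + Λ.d τ := le_self_add
  have hτ : z.toFun (Λ.d lam) (Λ.d lam + Λ.d τ) hmid = τ := by
    refine Eq.trans ?_ hy₁
    simp only [InfinitePath.shift, add_zero]
  simp only [d_comp]
  rw [← z.comp_eq 0 _ _ zero_le hmid (by rw [z.src, z.rng])]
  simp only [hz₁, hτ]

section Prepend

variable (lam : Λ.Path) (x : InfinitePath Λ) (hx : Λ.s lam = x.range)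

noncomputable def prependUpTo (u : Fin k → ℕ) : Λ.Path :=
  Λ.comp lam (x.toFun 0 u zero_le) (hx.trans (x.rng 0 u zero_le).symm)

variable {lam x hx}

theorem d_prependUpTo (u : Fin k → ℕ) : Λ.d (Λ.prependUpTo lam x hx u) = Λ.d lam + u := by
  rw [prependUpTo, d_comp, x.d_eq, tsub_zero]

theorem prependUpTo_eq_comp {u v : Fin k → ℕ} (huv : u ≤ v) :
    Λ.prependUpTo lam x hx v =
      Λ.comp (Λ.prependUpTo lam x hx u) (x.toFun u v huv)
        (by rw [prependUpTo, s_comp, x.src, x.rng]) := by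
  unfold prependUpTo
  rw [comp_assoc]
  simp only [x.comp_eq]

theorem IsSegment.prependUpTo_mono {u v a b : Fin k → ℕ} {δ : Λ.Path} (huv : u ≤ v)
    (hδ : Λ.IsSegment (Λ.prependUpTo lam x hx u) a b δ) :
    Λ.IsSegment (Λ.prependUpTo lam x hx v) a b δ := by
  rw [prependUpTo_eq_comp huv]
  exact hδ.comp_right _

theorem exists_isSegment_prependUpTo {p q : Fin k → ℕ} (hpq : p ≤ q) :
    ∃ δ, Λ.IsSegment (Λ.prependUpTo lam x hx q) p q δ :=
  exists_isSegment hpq (by rw [d_prependUpTo]; exact le_add_self)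

variable (lam x hx) in
noncomputable def prependSeg {p q : Fin k → ℕ} (hpq : p ≤ q) : Λ.Path :=
  (exists_isSegment_prependUpTo (hx := hx) hpq).choose

theorem isSegment_prependSeg {p q v : Fin k → ℕ} (hpq : p ≤ q) (hqv : q ≤ v) :
    Λ.IsSegment (Λ.prependUpTo lam x hx v) p q (Λ.prependSeg lam x hx hpq) :=
  (exists_isSegment_prependUpTo hpq).choose_spec.prependUpTo_mono hqv

variable (lam x hx)

noncomputable def prepend : InfinitePath Λ where
  toFun _ _ hpq := Λ.prependSeg lam x hx hpq
  d_eq _ _ hpq := (isSegment_prependSeg hpq le_rfl).d_eq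
  src _ _ hpq :=
    (isSegment_prependSeg hpq le_rfl).source.unique (isSegment_prependSeg le_rfl le_rfl)
  rng _ _ hpq := (isSegment_prependSeg hpq le_rfl).range.unique (isSegment_prependSeg le_rfl hpq)
  comp_eq _ _ _ hpq hqt hc := ((isSegment_prependSeg hpq hqt).comp
    (isSegment_prependSeg hqt le_rfl) hc).unique (isSegment_prependSeg (hpq.trans hqt) le_rfl)

theorem extEq_prepend : Λ.ExtEq lam (Λ.prepend lam x hx) x := by
  refine ⟨(isSegment_prependSeg zero_le le_rfl).unique (isSegment_left _),
    InfinitePath.ext fun p q hpq => ?_⟩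
  have hseg : Λ.IsSegment (Λ.prependUpTo lam x hx q) (Λ.d lam + p) (Λ.d lam + q)
      (x.toFun p q hpq) := by
    rw [prependUpTo_eq_comp hpq]
    exact isSegment_right _ (d_prependUpTo p) (by rw [x.d_eq, add_assoc, add_tsub_cancel_of_le hpq])
  exact (isSegment_prependSeg (add_le_add le_rfl hpq) le_rfl).unique
    (hseg.prependUpTo_mono le_add_self)

end Prepend

end KGraph

theorem theta_extension_general {k : ℕ} (Λ : KGraph k) (m n : Fin k → ℕ) (μ : Λ.Path) :
    ∀ ν : Λ.Path, Λ.IsTheta m n μ ν →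
      (∀ α : Λ.Path, ∀ (h1 : Λ.s α = Λ.r μ) (h2 : Λ.s α = Λ.r ν),
        Λ.IsTheta (Λ.d α + m) (Λ.d α + n) (Λ.comp α μ h1) (Λ.comp α ν h2)) ∧
      (∀ β : Λ.Path, ∀ (h1 : Λ.s μ = Λ.r β) (h2 : Λ.s ν = Λ.r β),
        Λ.IsTheta (m + Λ.d β) (n + Λ.d β) (Λ.comp μ β h1) (Λ.comp ν β h2)) := by
  rintro ν ⟨hμ, hν, hθ⟩
  constructor
  · refine fun α h₁ h₂ => ⟨by rw [Λ.d_comp, hμ], by rw [Λ.d_comp, hν], fun x hx => ?_⟩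
    obtain ⟨y, hyμ, hyν⟩ := hθ x (hx.trans (Λ.s_comp α μ h₁))
    have hα : Λ.s α = y.range := h₁.trans hyμ.range_eq.symm
    exact ⟨Λ.prepend α y hα, (Λ.extEq_prepend α y hα).comp h₁ hyμ,
      (Λ.extEq_prepend α y hα).comp h₂ hyν⟩
  · refine fun β h₁ h₂ => ⟨by rw [Λ.d_comp, hμ], by rw [Λ.d_comp, hν], fun x hx => ?_⟩
    have hβ : Λ.s β = x.range := (hx.trans (Λ.s_comp μ β h₁)).symm
    obtain ⟨y, hyμ, hyν⟩ := hθ (Λ.prepend β x hβ)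
      ((Λ.extEq_prepend β x hβ).range_eq.trans h₁.symm)
    exact ⟨y, hyμ.comp h₁ (Λ.extEq_prepend β x hβ), hyν.comp h₂ (Λ.extEq_prepend β x hβ)⟩

/-- For `m − n ∈ Per Λ` and `μ ∈ Λ^m`: `θ_{d(α)+m, d(α)+n}(αμ) = α·θ_{m,n}(μ)` for all
`α` with `s(α) = r(μ)`, and `θ_{m+d(β), n+d(β)}(μβ) = θ_{m,n}(μ)·β` for all `β` with
`r(β) = s(μ)`. -/
theorem theta_extension {k : ℕ} (Λ : KGraph k)
    (hfin : Λ.IsFinite) (hsc : Λ.StronglyConnected)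
    (m n : Fin k → ℕ) (hmn : (fun i => (m i : ℤ) - n i) ∈ Λ.Per)
    (μ : Λ.Path) (hμ : Λ.d μ = m) :
    ∀ ν : Λ.Path, Λ.IsTheta m n μ ν →
      (∀ α : Λ.Path, ∀ (h1 : Λ.s α = Λ.r μ) (h2 : Λ.s α = Λ.r ν),
        Λ.IsTheta (Λ.d α + m) (Λ.d α + n) (Λ.comp α μ h1) (Λ.comp α ν h2)) ∧
      (∀ β : Λ.Path, ∀ (h1 : Λ.s μ = Λ.r β) (h2 : Λ.s ν = Λ.r β),
        Λ.IsTheta (m + Λ.d β) (n + Λ.d β) (Λ.comp μ β h1) (Λ.comp ν β h2)) :=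
  theta_extension_general Λ m n μ
end
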